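/- arXiv:1508.02867 — 5 statements merged into one kernel-verified Lean document; each statement's English description precedes it below -/
import Mathlib

section
/- Let F : ℝⁿ → ℝⁿ be C² and set A(u) := DG(u)⁻¹ · DF(u). Suppose there exists a differentiable entropy-flux function ψ : ℝⁿ → ℝ with ∇ψ(u)ᵀ = ∇η(u)ᵀ A(u) for all u ∈ ℝⁿ. Then for every u ∈ ℝⁿ the matrix N(u) is symmetric and satisfies the symmetrizer identity N(u) A(u) = A(u)ᵀ N(u). -/
open Matrix

/-- The Jacobian matrix of a map `f : ℝⁿ → ℝⁿ` at a point `u`: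
`(jacM f u) i j = ∂fᵢ/∂uⱼ (u)`. -/
noncomputable def jacM {ι : Type*} [Fintype ι] [DecidableEq ι]
    (f : (ι → ℝ) → (ι → ℝ)) (u : ι → ℝ) : Matrix ι ι ℝ :=
  Matrix.of fun i j => fderiv ℝ f u (Pi.single j 1) i

/-- The gradient of a scalar function. -/
noncomputable def gradV {ι : Type*} [Fintype ι] [DecidableEq ι]
    (f : (ι → ℝ) → ℝ) (u : ι → ℝ) : ι → ℝ :=
  fun i => fderiv ℝ f u (Pi.single i 1)

/-- The Hessian matrix of a scalar function: `(hessM f u) j k = ∂²f/∂uⱼ∂u_k (u)`. -/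
noncomputable def hessM {ι : Type*} [Fintype ι] [DecidableEq ι]
    (f : (ι → ℝ) → ℝ) (u : ι → ℝ) : Matrix ι ι ℝ :=
  Matrix.of fun j k => fderiv ℝ (fun x => fderiv ℝ f x (Pi.single k 1)) u (Pi.single j 1)

/-- Second partial derivatives of a vector-valued map:
`hess2 f u i j k = ∂²fᵢ/∂uⱼ∂u_k (u)`. -/
noncomputable def hess2 {ι : Type*} [Fintype ι] [DecidableEq ι]
    (f : (ι → ℝ) → (ι → ℝ)) (u : ι → ℝ) (i j k : ι) : ℝ :=
  fderiv ℝ (fun x => fderiv ℝ f x (Pi.single k 1) i) u (Pi.single j 1)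

/-- The candidate symmetrizer
`N(u)_{jk} = ∂²η/∂uⱼ∂u_k(u) − Σ_{i,i'} ∂η/∂uᵢ(u) (DG(u)⁻¹)_{ii'} ∂²G_{i'}/∂uⱼ∂u_k(u)`. -/
noncomputable def symmN {ι : Type*} [Fintype ι] [DecidableEq ι]
    (G : (ι → ℝ) → (ι → ℝ)) (η : (ι → ℝ) → ℝ) (u : ι → ℝ) : Matrix ι ι ℝ :=
  Matrix.of fun j k =>
    hessM η u j k - ∑ i : ι, ∑ i' : ι, gradV η u i * (jacM G u)⁻¹ i i' * hess2 G u i' j k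

/-!
With the entropy variable `p = ∇η · DG⁻¹` one has `∇η = p · DG` and `∇ψ = p · DF`; in particular
`∇ψ` is `C¹`, so `ψ` is `C²`. Differentiating the two identities gives
`D²η = DpᵀDG + Σᵢ pᵢ D²Gᵢ` and `D²ψ = DpᵀDF + Σᵢ pᵢ D²Fᵢ`. The first says `N = DpᵀDG`, and by
Clairaut's theorem for `η`, `ψ`, `Gᵢ`, `Fᵢ` both `N` and `DpᵀDF = N A` are symmetric, whence
`N A = (N A)ᵀ = Aᵀ N`.
-/

section MatrixContDiff

variable {𝕜 E ι : Type*} [NontriviallyNormedField 𝕜] [NormedAddCommGroup E] [NormedSpace 𝕜 E]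
  [Fintype ι] [DecidableEq ι] {k : WithTop ℕ∞} {M : E → Matrix ι ι 𝕜}

lemma contDiff_det_of_entries (hM : ∀ i j, ContDiff 𝕜 k fun x => M x i j) :
    ContDiff 𝕜 k fun x => (M x).det := by
  simp only [Matrix.det_apply']
  exact ContDiff.sum fun σ _ => contDiff_const.mul (contDiff_prod fun i _ => hM (σ i) i)

lemma contDiff_inv_apply_of_entries (hM : ∀ i j, ContDiff 𝕜 k fun x => M x i j)
    (hdet : ∀ x, IsUnit (M x).det) (i j : ι) : ContDiff 𝕜 k fun x => (M x)⁻¹ i j := by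
  have hadj : ContDiff 𝕜 k fun x => (M x).adjugate i j := by
    simp only [Matrix.adjugate_apply]
    refine contDiff_det_of_entries fun a b => ?_
    rcases eq_or_ne a j with rfl | hab
    · simpa using contDiff_const
    · simpa [Matrix.updateRow_ne hab] using hM a b
  simp only [Matrix.inv_def, Matrix.smul_apply, Ring.inverse_eq_inv, smul_eq_mul]
  exact ((contDiff_det_of_entries hM).inv fun x => (hdet x).ne_zero).mul hadj

end MatrixContDiff

lemma Matrix.mul_inv_mul_eq_transpose_mul_of_isSymm {ι R : Type*} [Fintype ι] [DecidableEq ι]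
    [CommRing R] {P A B : Matrix ι ι R} (hA : IsUnit A.det) (hPA : (Pᵀ * A).IsSymm)
    (hPB : (Pᵀ * B).IsSymm) : (Pᵀ * A) * (A⁻¹ * B) = (A⁻¹ * B)ᵀ * (Pᵀ * A) := by
  have hcancel : (Pᵀ * A) * (A⁻¹ * B) = Pᵀ * B := by
    rw [Matrix.mul_assoc, ← Matrix.mul_assoc A, mul_nonsing_inv A hA, Matrix.one_mul]
  rw [← hPA.eq, ← transpose_mul, hPA.eq, hcancel, hPB.eq]

section Calculus

variable {ι : Type*} [Fintype ι] [DecidableEq ι]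

lemma jacM_apply_eq_gradV {H : (ι → ℝ) → ι → ℝ} {x : ι → ℝ} (hH : DifferentiableAt ℝ H x)
    (i j : ι) : jacM H x i j = gradV (fun y => H y i) x j := by
  simp [jacM, gradV, fderiv_apply hH]

lemma hess2_eq_hessM {H : (ι → ℝ) → ι → ℝ} (hH : Differentiable ℝ H) (u : ι → ℝ) (i : ι) :
    Matrix.of (hess2 H u i) = hessM (fun y => H y i) u := by
  ext j k
  have hjac : (fun x => fderiv ℝ H x (Pi.single k 1) i) = fun x => gradV (fun y => H y i) x k :=
    funext fun x => jacM_apply_eq_gradV (hH x) i k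
  simp only [hess2, hessM, Matrix.of_apply, hjac, gradV]

lemma hessM_isSymm {f : (ι → ℝ) → ℝ} (hf : ContDiff ℝ 2 f) (u : ι → ℝ) : (hessM f u).IsSymm := by
  have hsymm := hf.contDiffAt.isSymmSndFDerivAt (x := u) (by simp)
  have hdiff : DifferentiableAt ℝ (fderiv ℝ f) u :=
    (hf.fderiv_right (m := 1) le_rfl).differentiable one_ne_zero u
  have hpartial (v w : ι → ℝ) :
      fderiv ℝ (fun x => fderiv ℝ f x v) u w = fderiv ℝ (fderiv ℝ f) u w v := by
    rw [fderiv_clm_apply hdiff (differentiableAt_const v)]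
    simp
  ext j k
  simp only [Matrix.transpose_apply, hessM, Matrix.of_apply, hpartial, hsymm (Pi.single j 1)]

lemma contDiff_jacM_apply {k : ℕ} {H : (ι → ℝ) → ι → ℝ} (hH : ContDiff ℝ (k + 1) H) (i j : ι) :
    ContDiff ℝ k fun x => jacM H x i j :=
  contDiff_pi.1 ((hH.fderiv_right le_rfl).clm_apply contDiff_const) i

lemma contDiff_gradV_apply {k : ℕ} {f : (ι → ℝ) → ℝ} (hf : ContDiff ℝ (k + 1) f) (j : ι) :
    ContDiff ℝ k fun x => gradV f x j :=
  (hf.fderiv_right le_rfl).clm_apply contDiff_const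

lemma fderiv_apply_eq_sum_gradV (f : (ι → ℝ) → ℝ) (x v : ι → ℝ) :
    fderiv ℝ f x v = ∑ j, v j * gradV f x j := by
  conv_lhs => rw [pi_eq_sum_univ' v]
  simp [gradV]

lemma contDiff_succ_of_gradV {k : ℕ} {f : (ι → ℝ) → ℝ} (hf : Differentiable ℝ f)
    (hgrad : ∀ j, ContDiff ℝ k fun x => gradV f x j) : ContDiff ℝ (k + 1) f := by
  refine contDiff_succ_iff_fderiv_apply.2 ⟨hf, by simp, fun v => ?_⟩
  simp only [fderiv_apply_eq_sum_gradV]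
  exact ContDiff.sum fun j _ => contDiff_const.mul (hgrad j)

lemma hessM_eq_of_gradV_eq_vecMul {f : (ι → ℝ) → ℝ} {p H : (ι → ℝ) → ι → ℝ} {u : ι → ℝ}
    (hp : DifferentiableAt ℝ p u)
    (hJ : ∀ i k, DifferentiableAt ℝ (fun x => jacM H x i k) u)
    (hgrad : ∀ x, gradV f x = vecMul (p x) (jacM H x)) :
    hessM f u = (jacM p u)ᵀ * jacM H u + ∑ i, p u i • of (hess2 H u i) := by
  ext j k
  have hgrad_k : (fun x => gradV f x k) = fun x => ∑ i, p x i * jacM H x i k := by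
    funext x
    rw [hgrad x]
    rfl
  have hpi (i : ι) : DifferentiableAt ℝ (fun x => p x i) u := differentiableAt_pi.1 hp i
  change fderiv ℝ (fun x => gradV f x k) u (Pi.single j 1) = _
  rw [hgrad_k,
    fderiv_fun_sum (A := fun i x => p x i * jacM H x i k) fun i _ => (hpi i).mul (hJ i k),
    _root_.sum_apply, Matrix.add_apply, mul_apply, Matrix.sum_apply, ← Finset.sum_add_distrib]
  refine Finset.sum_congr rfl fun i _ => ?_
  rw [fderiv_fun_mul (hpi i) (hJ i k), transpose_apply, jacM_apply_eq_gradV hp]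
  simp only [_root_.add_apply, _root_.smul_apply, smul_eq_mul, Matrix.smul_apply, of_apply, gradV,
    hess2, jacM]
  ring

lemma isSymm_sum_smul_hess2 {H : (ι → ℝ) → ι → ℝ} (hH : ContDiff ℝ 2 H) (c : ι → ℝ) (u : ι → ℝ) :
    (∑ i, c i • of (hess2 H u i)).IsSymm := by
  simp only [IsSymm, transpose_sum, transpose_smul,
    hess2_eq_hessM (hH.differentiable two_ne_zero), (hessM_isSymm (contDiff_pi.1 hH _) u).eq]

end Calculus

section Symmetrizer

variable {ι : Type*} [Fintype ι] [DecidableEq ι] {G F : (ι → ℝ) → ι → ℝ} {η ψ : (ι → ℝ) → ℝ}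

/-- The entropy variable `∇η · DG⁻¹`, i.e. the gradient of `η` as a function of `v = G(u)`. -/
noncomputable def entropyVar (G : (ι → ℝ) → ι → ℝ) (η : (ι → ℝ) → ℝ) (x : ι → ℝ) : ι → ℝ :=
  vecMul (gradV η x) (jacM G x)⁻¹

lemma contDiff_entropyVar (hG : ContDiff ℝ 2 G) (hη : ContDiff ℝ 2 η)
    (hGinv : ∀ u, IsUnit (jacM G u).det) : ContDiff ℝ 1 (entropyVar G η) := by
  refine contDiff_pi.2 fun i' => ?_
  simp only [entropyVar, vecMul, dotProduct]
  exact ContDiff.sum fun i _ => (contDiff_gradV_apply hη i).mul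
    (contDiff_inv_apply_of_entries (contDiff_jacM_apply hG) hGinv i i')

lemma vecMul_entropyVar_jacM (hGinv : ∀ u, IsUnit (jacM G u).det) (x : ι → ℝ) :
    vecMul (entropyVar G η x) (jacM G x) = gradV η x := by
  rw [entropyVar, vecMul_vecMul, nonsing_inv_mul _ (hGinv x), vecMul_one]

lemma gradV_eq_vecMul_entropyVar
    (hflux : ∀ u j, gradV ψ u j = ∑ i, gradV η u i * ((jacM G u)⁻¹ * jacM F u) i j)
    (x : ι → ℝ) : gradV ψ x = vecMul (entropyVar G η x) (jacM F x) := by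
  ext j
  rw [hflux, entropyVar, vecMul_vecMul]
  rfl

lemma symmN_eq_sub (u : ι → ℝ) :
    symmN G η u = hessM η u - ∑ i, entropyVar G η u i • of (hess2 G u i) := by
  ext j k
  simp only [symmN, entropyVar, vecMul, dotProduct, of_apply, Matrix.sub_apply, Matrix.sum_apply,
    Matrix.smul_apply, smul_eq_mul, Finset.sum_mul]
  rw [Finset.sum_comm]

lemma isSymm_symmN (hG : ContDiff ℝ 2 G) (hη : ContDiff ℝ 2 η) (u : ι → ℝ) :
    (symmN G η u).IsSymm := by
  rw [symmN_eq_sub]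
  exact (hessM_isSymm hη u).sub (isSymm_sum_smul_hess2 hG _ u)

lemma symmN_eq_transpose_jacM_entropyVar_mul (hG : ContDiff ℝ 2 G) (hη : ContDiff ℝ 2 η)
    (hGinv : ∀ u, IsUnit (jacM G u).det) (u : ι → ℝ) :
    symmN G η u = (jacM (entropyVar G η) u)ᵀ * jacM G u := by
  rw [symmN_eq_sub, hessM_eq_of_gradV_eq_vecMul
    ((contDiff_entropyVar hG hη hGinv).differentiable one_ne_zero u)
    (fun i k => (contDiff_jacM_apply hG i k).differentiable one_ne_zero u)
    (fun x => (vecMul_entropyVar_jacM hGinv x).symm), add_sub_cancel_right]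

lemma isSymm_transpose_jacM_entropyVar_mul_jacM (hG : ContDiff ℝ 2 G) (hF : ContDiff ℝ 2 F)
    (hη : ContDiff ℝ 2 η) (hGinv : ∀ u, IsUnit (jacM G u).det) (hψ : Differentiable ℝ ψ)
    (hflux : ∀ u j, gradV ψ u j = ∑ i, gradV η u i * ((jacM G u)⁻¹ * jacM F u) i j)
    (u : ι → ℝ) : ((jacM (entropyVar G η) u)ᵀ * jacM F u).IsSymm := by
  have hp := contDiff_entropyVar hG hη hGinv
  have hgradψ := gradV_eq_vecMul_entropyVar hflux
  have hψ2 : ContDiff ℝ 2 ψ := by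
    refine contDiff_succ_of_gradV (k := 1) hψ fun j => ?_
    simp only [hgradψ, vecMul, dotProduct]
    exact ContDiff.sum fun i _ => (contDiff_pi.1 hp i).mul (contDiff_jacM_apply hF i j)
  have hhess := hessM_eq_of_gradV_eq_vecMul (hp.differentiable one_ne_zero u)
    (fun i k => (contDiff_jacM_apply hF i k).differentiable one_ne_zero u) hgradψ
  rw [← add_sub_cancel_right ((jacM (entropyVar G η) u)ᵀ * jacM F u), ← hhess]
  exact (hessM_isSymm hψ2 u).sub (isSymm_sum_smul_hess2 hF _ u)

end Symmetrizer

theorem statement0_general (n : ℕ)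
    (G F : (Fin n → ℝ) → (Fin n → ℝ)) (η : (Fin n → ℝ) → ℝ) (ψ : (Fin n → ℝ) → ℝ)
    (hG : ContDiff ℝ 2 G) (hF : ContDiff ℝ 2 F) (hη : ContDiff ℝ 2 η)
    (hGinv : ∀ u, IsUnit (jacM G u).det)
    (hψ : Differentiable ℝ ψ)
    (hflux : ∀ u j, gradV ψ u j =
      ∑ i : Fin n, gradV η u i * ((jacM G u)⁻¹ * jacM F u) i j) :
    ∀ u : Fin n → ℝ,
      (symmN G η u).IsSymm ∧
      symmN G η u * ((jacM G u)⁻¹ * jacM F u) =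
        ((jacM G u)⁻¹ * jacM F u)ᵀ * symmN G η u := by
  intro u
  have hN := symmN_eq_transpose_jacM_entropyVar_mul hG hη hGinv u
  refine ⟨isSymm_symmN hG hη u, ?_⟩
  rw [hN]
  exact mul_inv_mul_eq_transpose_mul_of_isSymm (hGinv u) (hN ▸ isSymm_symmN hG hη u)
    (isSymm_transpose_jacM_entropyVar_mul_jacM hG hF hη hGinv hψ hflux u)

/-- If `F` is `C²`, `A(u) = DG(u)⁻¹ · DF(u)`, and there is a differentiable
entropy-flux `ψ` with `∇ψ(u)ᵀ = ∇η(u)ᵀ A(u)` for all `u`, then for every `u` the matrix `N(u)`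
is symmetric and `N(u) A(u) = A(u)ᵀ N(u)`. -/
theorem statement0 (n : ℕ) (hn : 1 ≤ n)
    (G F : (Fin n → ℝ) → (Fin n → ℝ)) (η : (Fin n → ℝ) → ℝ) (ψ : (Fin n → ℝ) → ℝ)
    (hG : ContDiff ℝ 2 G) (hF : ContDiff ℝ 2 F) (hη : ContDiff ℝ 2 η)
    (hGinv : ∀ u, IsUnit (jacM G u).det)
    (hψ : Differentiable ℝ ψ)
    (hflux : ∀ u j, gradV ψ u j =
      ∑ i : Fin n, gradV η u i * ((jacM G u)⁻¹ * jacM F u) i j) :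
    ∀ u : Fin n → ℝ,
      (symmN G η u).IsSymm ∧
      symmN G η u * ((jacM G u)⁻¹ * jacM F u) =
        ((jacM G u)⁻¹ * jacM F u)ᵀ * symmN G η u :=
  statement0_general n G F η ψ hG hF hη hGinv hψ hflux
end

section
/- Let r : ℝⁿ → ℝⁿ be continuous with r(0) = e₁, let V ⊆ ℝⁿ be an open neighborhood of 0, and let u : V → ℝⁿ be a C¹ map such that u(0, x^♭) = (0, x^♭) for every point (0, x^♭) ∈ V and ∂u/∂x₁(x) = r(u(x)) for every x ∈ V. Then u(0) = 0, the Fréchet derivative of u at 0 is the identity map, and u is a local C¹ diffeomorphism at 0: there exist open neighborhoods U₁, U₂ of 0 such that u restricts to a bijection from U₁ onto U₂ whose inverse is C¹. -/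
/-!
On the hyperplane `x₁ = 0` the map `u` is the identity, so `Du(0)` fixes `e₂, …, eₙ`; the flow
equation at `0` gives `Du(0) e₁ = r(u 0) = r 0 = e₁`. Hence `Du(0) = id`, and the inverse function
theorem makes `u` a local `C¹` diffeomorphism at `0`.
-/

open Set Filter Topology

theorem fderiv_apply_eq_self_of_eventuallyEq_along {E : Type*} [NormedAddCommGroup E]
    [NormedSpace ℝ E] {u : E → E} {x v : E} (hu : DifferentiableAt ℝ u x)
    (h : ∀ᶠ t : ℝ in 𝓝 0, u (x + t • v) = x + t • v) : fderiv ℝ u x v = v := by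
  have hline : HasLineDerivAt ℝ u v x v :=
    HasDerivAt.congr_of_eventuallyEq ((hasFDerivAt_id x).hasLineDerivAt v) h
  exact hu.hasFDerivAt.hasLineDerivAt v |>.unique hline

theorem fderiv_eq_id_of_eqOn_hyperplane {ι : Type*} [Fintype ι] [DecidableEq ι]
    {u : (ι → ℝ) → (ι → ℝ)} {V : Set (ι → ℝ)} {p : ι → ℝ} {i₀ : ι}
    (hV : V ∈ 𝓝 p) (hp : p i₀ = 0) (hu : DifferentiableAt ℝ u p)
    (hhyp : ∀ x ∈ V, x i₀ = 0 → u x = x)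
    (hi₀ : fderiv ℝ u p (Pi.single i₀ 1) = Pi.single i₀ 1) :
    fderiv ℝ u p = ContinuousLinearMap.id ℝ (ι → ℝ) := by
  refine ContinuousLinearMap.coe_injective <| (Pi.basisFun ℝ ι).ext fun i => ?_
  simp only [Pi.basisFun_apply, ContinuousLinearMap.coe_coe, ContinuousLinearMap.coe_id]
  rcases eq_or_ne i i₀ with rfl | hi
  · exact hi₀
  refine fderiv_apply_eq_self_of_eventuallyEq_along hu ?_
  have hline : Tendsto (fun t : ℝ => p + t • Pi.single i (1 : ℝ)) (𝓝 0) (𝓝 p) :=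
    (by fun_prop : Continuous fun t : ℝ => p + t • Pi.single i (1 : ℝ)).tendsto' 0 p (by simp)
  filter_upwards [hline.eventually_mem hV] with t ht
  exact hhyp _ ht (by simp [hp, Pi.single_eq_of_ne hi.symm])

theorem ContDiffAt.exists_bijOn_contDiffOn_invOn {E F : Type*} [NormedAddCommGroup E]
    [NormedSpace ℝ E] [CompleteSpace E] [NormedAddCommGroup F] [NormedSpace ℝ F]
    {f : E → F} {f' : E ≃L[ℝ] F} {a : E} {n : ℕ} (hf : ContDiffAt ℝ n f a)
    (hf' : HasFDerivAt f (f' : E →L[ℝ] F) a) (hn : n ≠ 0) :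
    ∃ U₁ : Set E, ∃ U₂ : Set F, IsOpen U₁ ∧ IsOpen U₂ ∧ a ∈ U₁ ∧ f a ∈ U₂ ∧ BijOn f U₁ U₂ ∧
      ∃ g : F → E, ContDiffOn ℝ n g U₂ ∧ InvOn g f U₁ U₂ := by
  have hn' : (n : WithTop ℕ∞) ≠ 0 := by exact_mod_cast hn
  set H := hf.toOpenPartialHomeomorph f hf' hn'
  have ha : a ∈ H.source := hf.mem_toOpenPartialHomeomorph_source hf' hn'
  have hfa : f a ∈ H.target := hf.image_mem_toOpenPartialHomeomorph_target hf' hn'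
  obtain ⟨s, hs, hsymm⟩ := (hf.to_localInverse hf' hn').contDiffOn le_rfl (by simp)
  have hfa_s : f a ∈ interior s := mem_interior_iff_mem_nhds.2 hs
  -- `K.symm` is `H` cut down to the part of its target where `H.symm` is `Cⁿ`
  let K := H.symm.restrOpen (interior s) isOpen_interior
  refine ⟨K.target, K.source, K.open_target, K.open_source, ?_, ⟨hfa, hfa_s⟩, K.symm.bijOn,
    H.symm, hsymm.mono fun y hy => interior_subset hy.2, K.symm.invOn⟩
  exact ⟨ha, by simpa [H.left_inv ha, H] using hfa_s⟩

theorem statement4_general (n : ℕ) (hn : 0 < n)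
    (r : (Fin n → ℝ) → (Fin n → ℝ))
    (hr0 : r 0 = Pi.single (⟨0, hn⟩ : Fin n) 1)
    (V : Set (Fin n → ℝ)) (hV : IsOpen V) (h0V : (0 : Fin n → ℝ) ∈ V)
    (u : (Fin n → ℝ) → (Fin n → ℝ)) (hu : ContDiffOn ℝ 1 u V)
    (hinit : ∀ x ∈ V, x ⟨0, hn⟩ = 0 → u x = x)
    (hflow : ∀ x ∈ V, fderiv ℝ u x (Pi.single (⟨0, hn⟩ : Fin n) 1) = r (u x)) :
    u 0 = 0 ∧
    fderiv ℝ u 0 = ContinuousLinearMap.id ℝ (Fin n → ℝ) ∧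
    ∃ U₁ U₂ : Set (Fin n → ℝ), IsOpen U₁ ∧ IsOpen U₂ ∧
      (0 : Fin n → ℝ) ∈ U₁ ∧ (0 : Fin n → ℝ) ∈ U₂ ∧
      Set.BijOn u U₁ U₂ ∧
      ∃ g : (Fin n → ℝ) → (Fin n → ℝ), ContDiffOn ℝ 1 g U₂ ∧ Set.InvOn g u U₁ U₂ := by
  have hV0 : V ∈ 𝓝 0 := hV.mem_nhds h0V
  have hu_at : ContDiffAt ℝ 1 u 0 := hu.contDiffAt hV0
  have hu0 : u 0 = 0 := hinit 0 h0V rfl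
  have hDu : fderiv ℝ u 0 = ContinuousLinearMap.id ℝ (Fin n → ℝ) :=
    fderiv_eq_id_of_eqOn_hyperplane hV0 rfl (hu_at.differentiableAt one_ne_zero) hinit
      (by rw [hflow 0 h0V, hu0, hr0])
  have hderiv : HasFDerivAt u
      ((ContinuousLinearEquiv.refl ℝ (Fin n → ℝ) : (Fin n → ℝ) →L[ℝ] (Fin n → ℝ))) 0 := by
    simpa [hDu] using (hu_at.differentiableAt one_ne_zero).hasFDerivAt
  obtain ⟨U₁, U₂, hU₁, hU₂, h0U₁, hu0U₂, hbij, g, hg, hinv⟩ :=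
    hu_at.exists_bijOn_contDiffOn_invOn (n := 1) hderiv one_ne_zero
  exact ⟨hu0, hDu, U₁, U₂, hU₁, hU₂, h0U₁, hu0 ▸ hu0U₂, hbij, g, hg, hinv⟩

/-- Partially normalized coordinates form a local diffeomorphism.
Let `r : ℝⁿ → ℝⁿ` be continuous with `r(0) = e₁`, `V` an open neighborhood of `0`,
and `u : V → ℝⁿ` a `C¹` map such that `u(0, x^♭) = (0, x^♭)` for points of `V` with first
coordinate zero and `∂u/∂x₁(x) = r(u(x))` on `V`. Then `u(0) = 0`, `Du(0) = id`, and `u` is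
a local `C¹` diffeomorphism at `0`. -/
theorem statement4 (n : ℕ) (hn : 0 < n)
    (r : (Fin n → ℝ) → (Fin n → ℝ)) (hr : Continuous r)
    (hr0 : r 0 = Pi.single (⟨0, hn⟩ : Fin n) 1)
    (V : Set (Fin n → ℝ)) (hV : IsOpen V) (h0V : (0 : Fin n → ℝ) ∈ V)
    (u : (Fin n → ℝ) → (Fin n → ℝ)) (hu : ContDiffOn ℝ 1 u V)
    (hinit : ∀ x ∈ V, x ⟨0, hn⟩ = 0 → u x = x)
    (hflow : ∀ x ∈ V, fderiv ℝ u x (Pi.single (⟨0, hn⟩ : Fin n) 1) = r (u x)) :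
    u 0 = 0 ∧
    fderiv ℝ u 0 = ContinuousLinearMap.id ℝ (Fin n → ℝ) ∧
    ∃ U₁ U₂ : Set (Fin n → ℝ), IsOpen U₁ ∧ IsOpen U₂ ∧
      (0 : Fin n → ℝ) ∈ U₁ ∧ (0 : Fin n → ℝ) ∈ U₂ ∧
      Set.BijOn u U₁ U₂ ∧
      ∃ g : (Fin n → ℝ) → (Fin n → ℝ), ContDiffOn ℝ 1 g U₂ ∧ Set.InvOn g u U₁ U₂ :=
  statement4_general n hn r hr0 V hV h0V u hu hinit hflow
end

section
/- Let Q : ℝⁿ → ℝⁿ be C² on a neighborhood of 0 and assume: (a) Q(t e₁) = 0 for all sufficiently small |t| (weak degeneracy of the source along the first characteristic trajectory through 0); (b) ∂Qᵢ/∂u_q(0) = 0 and ∂Q_q/∂uᵢ(0) = 0 for all 1 ≤ q ≤ r and 1 ≤ i ≤ n. Then there exist constants C > 0 and δ > 0 such that for all u with |u| ≤ δ: (i) |Q_q(u)| ≤ C |u^♭| |u| for every 1 ≤ q ≤ r; (ii) |Q_p(u) − Σ_{p'=r+1}^{n} ∂Q_p/∂u_{p'}(0) u_{p'}| ≤ C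 |u^♭| |u| for every r+1 ≤ p ≤ n. -/
open Matrix

/-- The norm of the part `u^♭ = (u₂, …, uₙ)` of a vector `u ∈ ℝⁿ`
(the remaining components being put to zero). -/
noncomputable def normFlat {n : ℕ} (u : Fin n → ℝ) : ℝ :=
  ‖(fun i : Fin n => if 1 ≤ (i : ℕ) then u i else 0)‖

/-- The norm of the part `u^D = (u_{r+1}, …, uₙ)` of a vector `u ∈ ℝⁿ`
(the remaining components being put to zero). -/
noncomputable def normTail {n : ℕ} (r : ℕ) (u : Fin n → ℝ) : ℝ :=
  ‖(fun i : Fin n => if r ≤ (i : ℕ) then u i else 0)‖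

/-!
Put `L = DQ(0)`. Because `Q` is `C²`, `D(Q - L)(x) = DQ(x) - DQ(0) = O(|x|)`, so the mean value
inequality on the ball of radius `|u|` gives `|(Q - L)(u) - (Q - L)(a)| ≤ C |u| |u - a|`.
For `a = u₁ e₁` the left-hand side is `|(Q - L)(u)|`: `Q(a) = 0` by the degeneracy along the first
axis and `L e₁ = 0` by (b) with `q = 1`; moreover `|u - a| = |u^♭|`. Finally (b) says that the rows
and columns `1, …, r` of `L` vanish, which leaves `(Lu)_q = 0` for `q ≤ r` and
`(Lu)_p = Σ_{p' > r} ∂Q_p/∂u_{p'}(0) u_{p'}` for `p > r`.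
-/

open Metric Topology

theorem ContDiffAt.exists_norm_sub_sub_fderiv_le {E F : Type*} [NormedAddCommGroup E]
    [NormedSpace ℝ E] [NormedAddCommGroup F] [NormedSpace ℝ F] {f : E → F} {x : E}
    (hf : ContDiffAt ℝ 2 f x) :
    ∃ K > 0, ∃ δ > 0, ∀ ρ ≤ δ, ∀ u ∈ closedBall x ρ, ∀ v ∈ closedBall x ρ,
      ‖f u - f v - fderiv ℝ f x (u - v)‖ ≤ K * ρ * ‖u - v‖ := by
  obtain ⟨K, t, ht, hlip⟩ := (hf.fderiv_right (m := 1) (by norm_num)).exists_lipschitzOnWith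
  have hdiff : ∀ᶠ y in 𝓝 x, DifferentiableAt ℝ f y :=
    (hf.eventually (by simp)).mono fun y hy => hy.differentiableAt (by norm_num)
  obtain ⟨δ, hδ, hball⟩ := nhds_basis_closedBall.mem_iff.1 (Filter.inter_mem ht hdiff)
  refine ⟨K + 1, by positivity, δ, hδ, fun ρ hρ u hu v hv => ?_⟩
  have hsub : closedBall x ρ ⊆ t ∩ {y | DifferentiableAt ℝ f y} :=
    (closedBall_subset_closedBall hρ).trans hball
  refine (convex_closedBall x ρ).norm_image_sub_le_of_norm_fderiv_le'
    (fun y hy => (hsub hy).2) (fun y hy => ?_) hv hu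
  calc ‖fderiv ℝ f y - fderiv ℝ f x‖ ≤ K * ‖y - x‖ := by
        simpa [dist_eq_norm] using hlip.dist_le_mul y (hsub hy).1 x (mem_of_mem_nhds ht)
    _ ≤ (K + 1) * ρ :=
        mul_le_mul (by simp) (mem_closedBall_iff_norm.1 hy) (norm_nonneg _) (by positivity)

theorem ContinuousLinearMap.apply_pi_apply_eq_sum {ι κ R : Type*} [Fintype ι] [DecidableEq ι]
    [CommSemiring R] [TopologicalSpace R] (L : (ι → R) →L[R] (κ → R)) (u : ι → R) (p : κ) :
    L u p = ∑ i, L (Pi.single i 1) p * u i := by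
  conv_lhs => rw [pi_eq_sum_univ' u]
  simp [mul_comm]

theorem normFlat_eq_norm_sub_single {n : ℕ} (hn : 0 < n) (u : Fin n → ℝ) :
    normFlat u = ‖u - Pi.single ⟨0, hn⟩ (u ⟨0, hn⟩)‖ := by
  unfold normFlat
  congr 1
  funext i
  rcases Nat.eq_zero_or_pos i with h | h
  · obtain rfl : i = ⟨0, hn⟩ := Fin.ext h
    simp
  · have hi : i ≠ ⟨0, hn⟩ := fun hi => by simp [hi] at h
    simp [Nat.one_le_iff_ne_zero.2 h.ne', hi]

/-- Quadratic expansion of a weakly degenerate source term: if `Q` is `C²`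
near `0`, vanishes along the first axis near `0`, and the rows and columns `1,…,r` of
`∇Q(0)` vanish, then near `0` one has `|Q_q(u)| ≤ C|u^♭||u|` for `q ≤ r` and
`|Q_p(u) − Σ_{p'>r} ∂Q_p/∂u_{p'}(0) u_{p'}| ≤ C|u^♭||u|` for `p > r`. -/
theorem statement8 (n r : ℕ) (hr : 1 ≤ r) (hrn : r < n)
    (Q : (Fin n → ℝ) → (Fin n → ℝ))
    (hQ : ContDiffAt ℝ 2 Q 0)
    (ha : ∃ ε > 0, ∀ t : ℝ, |t| < ε →
      Q (t • (Pi.single (⟨0, by omega⟩ : Fin n) 1 : Fin n → ℝ)) = 0)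
    (hb : ∀ q i : Fin n, (q : ℕ) < r →
      fderiv ℝ Q 0 (Pi.single q 1) i = 0 ∧ fderiv ℝ Q 0 (Pi.single i 1) q = 0) :
    ∃ C > 0, ∃ δ > 0, ∀ u : Fin n → ℝ, ‖u‖ ≤ δ →
      (∀ q : Fin n, (q : ℕ) < r → |Q u q| ≤ C * normFlat u * ‖u‖) ∧
      (∀ p : Fin n, r ≤ (p : ℕ) →
        |Q u p - ∑ p' : Fin n,
            (if r ≤ (p' : ℕ) then fderiv ℝ Q 0 (Pi.single p' 1) p * u p' else 0)|
          ≤ C * normFlat u * ‖u‖) := by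
  obtain ⟨ε, hε, haxis⟩ := ha
  obtain ⟨K, hK, δ, hδ, htaylor⟩ := hQ.exists_norm_sub_sub_fderiv_le
  set L := fderiv ℝ Q 0
  set i₀ : Fin n := ⟨0, by omega⟩
  refine ⟨K, hK, min δ (ε / 2), by positivity, fun u hu => ?_⟩
  set a : Fin n → ℝ := Pi.single i₀ (u i₀)
  have ha_eq : u i₀ • Pi.single i₀ 1 = a := by rw [← Pi.single_smul', smul_eq_mul, mul_one]
  have hui₀ : |u i₀| ≤ ‖u‖ := norm_le_pi_norm u i₀
  have hQa : Q a = 0 := ha_eq ▸ haxis _ (by linarith [min_le_right δ (ε / 2)])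
  have hLa : L a = 0 := by
    have hLe : L (Pi.single i₀ 1) = 0 := funext fun i => (hb i₀ i hr).1
    rw [← ha_eq, map_smul, hLe, smul_zero]
  have ha_le : ‖a‖ ≤ ‖u‖ := by rwa [Pi.norm_single, Real.norm_eq_abs]
  have hbound : ∀ p, |Q u p - L u p| ≤ K * normFlat u * ‖u‖ := fun p => by
    have h := htaylor ‖u‖ (hu.trans (min_le_left _ _)) u (by simp) a (by simpa using ha_le)
    rw [hQa, map_sub, hLa, ← normFlat_eq_norm_sub_single, sub_zero, sub_zero, mul_right_comm] at h
    exact (norm_le_pi_norm (Q u - L u) p).trans h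
  refine ⟨fun q hq => ?_, fun p hp => ?_⟩
  · have hLu : L u q = 0 := by
      rw [L.apply_pi_apply_eq_sum]
      exact Finset.sum_eq_zero fun i _ => by rw [(hb q i hq).2, zero_mul]
    simpa [hLu] using hbound q
  · convert hbound p using 3
    rw [L.apply_pi_apply_eq_sum]
    refine Finset.sum_congr rfl fun i _ => ?_
    split_ifs with hi
    · rfl
    · rw [(hb i p (by omega)).1, zero_mul]
end

section
/- Let W ⊆ ℝⁿ be an open ball centered at 0, let J : W → ℝ^{n×n} be continuous with J(x) invertible for every x ∈ W, and let Q : W → ℝⁿ satisfy Q(0) = 0 and J(x)Q(x) = J(y)Q(y) whenever x, y ∈ W have x^♭ = y^♭. Then: (i) Q(t e₁) = 0 for every t with t e₁ ∈ W; (ii) for every index q and every t with t e₁ ∈ W, if the directional derivative ∂Q/∂u_q(0) := lim_{s→0} Q(s e_q)/s exists, then the directional derivative of Q along e_q at t e₁ exists and equals J(t e₁)⁻¹ J(0) ∂Q/∂u_q(0); in particular it vanishes whenever ∂Q/∂u_q(0) = 0. -/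
set_option maxHeartbeats 1000000


open Matrix

/-- If `A` is invertible and `A *ᵥ x = y`, then `x = A⁻¹ *ᵥ y`. -/
lemma aux_inv_mulVec {n : ℕ} {A : Matrix (Fin n) (Fin n) ℝ} (hA : IsUnit A.det)
    {x y : Fin n → ℝ} (h : A.mulVec x = y) : x = A⁻¹.mulVec y := by
  have : (A⁻¹ * A).mulVec x = A⁻¹.mulVec y := by
    rw [← Matrix.mulVec_mulVec, h]
  rwa [Matrix.nonsing_inv_mul A hA, Matrix.one_mulVec] at this

/-- If `J` is continuous and invertible on an open ball `W` centered at `0`,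
`Q(0) = 0`, and `J(x)Q(x)` depends only on `x^♭ = (x₂,…,xₙ)` on `W`, then `Q` vanishes along
the first axis inside `W`, and the directional derivative of `Q` along `e_q` at `t e₁` exists
and equals `J(te₁)⁻¹ J(0) ∂Q/∂u_q(0)` whenever the latter directional derivative at `0`
exists; in particular it vanishes whenever `∂Q/∂u_q(0) = 0`. -/
theorem statement9 (n : ℕ) (hn : 0 < n) (R : ℝ) (hR : 0 < R)
    (J : (Fin n → ℝ) → Matrix (Fin n) (Fin n) ℝ)
    (Q : (Fin n → ℝ) → (Fin n → ℝ))
    (hJc : ContinuousOn J (Metric.ball 0 R))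
    (hJinv : ∀ x ∈ Metric.ball (0 : Fin n → ℝ) R, IsUnit (J x).det)
    (hQ0 : Q 0 = 0)
    (hindep : ∀ x ∈ Metric.ball (0 : Fin n → ℝ) R, ∀ y ∈ Metric.ball (0 : Fin n → ℝ) R,
      (∀ i : Fin n, 1 ≤ (i : ℕ) → x i = y i) →
      (J x).mulVec (Q x) = (J y).mulVec (Q y)) :
    (∀ t : ℝ, t • (Pi.single (⟨0, hn⟩ : Fin n) 1 : Fin n → ℝ) ∈ Metric.ball (0 : Fin n → ℝ) R →
      Q (t • (Pi.single (⟨0, hn⟩ : Fin n) 1 : Fin n → ℝ)) = 0) ∧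
    (∀ (q : Fin n) (v : Fin n → ℝ),
      HasDerivAt (fun s : ℝ => Q (s • (Pi.single q 1 : Fin n → ℝ))) v 0 →
      ∀ t : ℝ,
        t • (Pi.single (⟨0, hn⟩ : Fin n) 1 : Fin n → ℝ) ∈ Metric.ball (0 : Fin n → ℝ) R →
        HasDerivAt
          (fun s : ℝ => Q (t • (Pi.single (⟨0, hn⟩ : Fin n) 1 : Fin n → ℝ) +
            s • (Pi.single q 1 : Fin n → ℝ)))
          (((J (t • (Pi.single (⟨0, hn⟩ : Fin n) 1 : Fin n → ℝ)))⁻¹ * J 0).mulVec v) 0 ∧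
        (v = 0 →
          HasDerivAt
            (fun s : ℝ => Q (t • (Pi.single (⟨0, hn⟩ : Fin n) 1 : Fin n → ℝ) +
              s • (Pi.single q 1 : Fin n → ℝ))) 0 0)) := by
  set e0 : Fin n → ℝ := Pi.single (⟨0, hn⟩ : Fin n) 1 with he0
  have h0mem : (0 : Fin n → ℝ) ∈ Metric.ball (0 : Fin n → ℝ) R := Metric.mem_ball_self hR
  -- coordinates ≥ 1 of t • e0 vanish
  have hcoord : ∀ (t : ℝ) (i : Fin n), 1 ≤ (i : ℕ) → (t • e0) i = 0 := by
    intro t i hi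
    have hne : i ≠ ⟨0, hn⟩ := by
      intro h; rw [h] at hi; simp at hi
    simp [he0, Pi.single_eq_of_ne hne]
  -- part (i)
  have part1 : ∀ t : ℝ, t • e0 ∈ Metric.ball (0 : Fin n → ℝ) R → Q (t • e0) = 0 := by
    intro t ht
    have key := hindep (t • e0) ht 0 h0mem (fun i hi => by
      rw [hcoord t i hi]; rfl)
    rw [hQ0, Matrix.mulVec_zero] at key
    have := aux_inv_mulVec (hJinv _ ht) key
    rw [Matrix.mulVec_zero] at this
    exact this
  refine ⟨part1, ?_⟩
  intro q v hv t ht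
  set eq : Fin n → ℝ := Pi.single q 1 with heq
  set x : ℝ → (Fin n → ℝ) := fun s => t • e0 + s • eq with hx
  set y : ℝ → (Fin n → ℝ) := fun s => s • eq with hy
  have hxcont : Continuous x := continuous_const.add (continuous_id.smul continuous_const)
  have hycont : Continuous y := continuous_id.smul continuous_const
  have hx0 : x 0 = t • e0 := by simp [hx]
  have hy0 : y 0 = 0 := by simp [hy]
  -- eventually memberships
  have hxmem : ∀ᶠ s in nhds (0 : ℝ), x s ∈ Metric.ball (0 : Fin n → ℝ) R := by
    have : Filter.Tendsto x (nhds 0) (nhds (t • e0)) := by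
      rw [← hx0]; exact hxcont.continuousAt
    exact this (Metric.isOpen_ball.mem_nhds ht)
  have hymem : ∀ᶠ s in nhds (0 : ℝ), y s ∈ Metric.ball (0 : Fin n → ℝ) R := by
    have : Filter.Tendsto y (nhds 0) (nhds 0) := by
      rw [← hy0]; exact hycont.continuousAt
    exact this (Metric.isOpen_ball.mem_nhds h0mem)
  -- the transfer matrix
  set g : ℝ → Matrix (Fin n) (Fin n) ℝ := fun s => (J (x s))⁻¹ * J (y s) with hg
  -- key identity
  have hkey : ∀ᶠ s in nhds (0 : ℝ), Q (x s) = (g s).mulVec (Q (y s)) := by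
    filter_upwards [hxmem, hymem] with s hxs hys
    have key := hindep (x s) hxs (y s) hys (fun i hi => by
      simp only [hx, Pi.add_apply]
      rw [hcoord t i hi, zero_add])
    have := aux_inv_mulVec (hJinv _ hxs) key
    rw [this, ← Matrix.mulVec_mulVec]
  -- continuity of g at 0
  have hJx : ContinuousAt (fun s => J (x s)) 0 :=
    ((hJc (x 0) (by rw [hx0]; exact ht)).continuousAt
      (Metric.isOpen_ball.mem_nhds (by rw [hx0]; exact ht))).comp hxcont.continuousAt
  have hJy : ContinuousAt (fun s => J (y s)) 0 := by
    exact ((hJc (y 0) (by rw [hy0]; exact h0mem)).continuousAt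
      (Metric.isOpen_ball.mem_nhds (by rw [hy0]; exact h0mem))).comp hycont.continuousAt
  have hginv : ContinuousAt (fun s => (J (x s))⁻¹) 0 := by
    have hdet : IsUnit (J (x 0)).det := by rw [hx0]; exact hJinv _ ht
    obtain ⟨u, hu⟩ := hdet
    have : ContinuousAt Ring.inverse (J (x 0)).det := by
      rw [← hu]; exact NormedRing.inverse_continuousAt u
    have h2 : ContinuousAt (Inv.inv ∘ fun s => J (x s)) 0 :=
      ContinuousAt.comp (continuousAt_matrix_inv _ this) hJx
    exact h2
  have hgcont : ContinuousAt g 0 := hginv.mul hJy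
  -- value and slope facts
  have hQx0 : Q (x 0) = 0 := by rw [hx0]; exact part1 t ht
  have hQy0 : Q (y 0) = 0 := by rw [hy0, hQ0]
  -- the slope of Q ∘ y tends to v
  have hslopey : Filter.Tendsto (fun s : ℝ => s⁻¹ • Q (y s)) (nhdsWithin 0 {(0:ℝ)}ᶜ) (nhds v) := by
    have := hasDerivAt_iff_tendsto_slope.mp hv
    refine this.congr' (Filter.Eventually.of_forall fun s => ?_)
    simp only [slope, vsub_eq_sub, sub_zero, zero_smul, hQ0, hy]
  -- main tendsto
  have hmain : Filter.Tendsto (fun s : ℝ => s⁻¹ • Q (x s)) (nhdsWithin 0 {(0:ℝ)}ᶜ)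
      (nhds ((g 0).mulVec v)) := by
    have hgt : Filter.Tendsto g (nhdsWithin 0 {(0:ℝ)}ᶜ) (nhds (g 0)) :=
      hgcont.continuousWithinAt.tendsto
    have hbil : Filter.Tendsto (fun p : Matrix (Fin n) (Fin n) ℝ × (Fin n → ℝ) => p.1.mulVec p.2)
        (nhds (g 0, v)) (nhds ((g 0).mulVec v)) :=
      (Continuous.matrix_mulVec continuous_fst continuous_snd).continuousAt
    have : Filter.Tendsto (fun s : ℝ => (g s).mulVec (s⁻¹ • Q (y s)))
        (nhdsWithin 0 {(0:ℝ)}ᶜ) (nhds ((g 0).mulVec v)) := by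
      simpa [Function.comp_def] using hbil.comp (hgt.prodMk_nhds hslopey)
    refine this.congr' ?_
    filter_upwards [hkey.filter_mono nhdsWithin_le_nhds] with s hs
    rw [Matrix.mulVec_smul, ← hs]
  have hgoal : HasDerivAt (fun s : ℝ => Q (x s)) ((g 0).mulVec v) 0 := by
    rw [hasDerivAt_iff_tendsto_slope]
    refine hmain.congr' (Filter.Eventually.of_forall fun s => ?_)
    simp only [slope, vsub_eq_sub, sub_zero, hx0, part1 t ht]
  have hg0 : g 0 = (J (t • e0))⁻¹ * J 0 := by
    show (J (x 0))⁻¹ * J (y 0) = _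
    rw [hx0, hy0]
  constructor
  · rw [← hg0]; exact hgoal
  · intro hv0
    have := hgoal
    rw [hv0, Matrix.mulVec_zero] at this
    exact this
end

section
/- Let Q : ℝⁿ → ℝⁿ be C³ on a neighborhood of 0 and assume: (a) Q(t e₁) = 0 and ∂Q/∂u_q(t e₁) = 0 for every 1 ≤ q ≤ r and all sufficiently small |t|; (b) ∂Q_q/∂uᵢ(0) = 0 for all 1 ≤ q ≤ r and 1 ≤ i ≤ n; (c) ∂²Q_q/∂u_{q'}∂u_{q''}(0) = 0 for all 1 ≤ q, q', q'' ≤ r. Then there exist constants C > 0 and δ > 0 such that for all u with |u| ≤ δ: (i) |Q_q(u)| ≤ C (|u^D| + |u^♭|²) |u| for every 1 ≤ q ≤ r; (ii) |Q_p(u) − Σ_{p'=r+1}^{n} ∂Q_p/∂u_{p'}(0) u_{p'}| ≤ C (|u^D||u₁| + |u^♭|²) for every r+1 ≤ p ≤ n. -/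
open Matrix

/-!
Write `u = a + v + u^D` with `a = u₁ e₁` on the axis, `v` the components `2, …, r` and `u^D` the
components `r+1, …, n`. By (a), `Q(a) = 0` and `DQ(a) v = 0`, so the first-order Taylor expansion
at `a` gives `Q(u) = DQ(a) u^D + O(|u^♭|²)`, and `DQ(a) - DQ(0) = O(|u₁|)`: this is (ii).
For a row `q ≤ r`, the mean value theorem on the segment `[a, u]` reduces (i) to bounding
`DQ_q(z)(v + u^D)`. The `u^D` part is `O(|z| |u^D|)` because `DQ_q(0) = 0` by (b). The `v` part
vanishes at `z = a`, and its derivative along the segment is `D²Q_q(w)(v + u^D, v)`, which is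
`O(|w| |v|² + |u^D| |v|)` because `D²Q_q(0)(v, v) = 0` by (c). The constants are Lipschitz
constants of `DQ` and `D²Q` near `0`, which is where `C³` enters.
-/

open Set Metric
open scoped NNReal Topology

theorem map_eq_zero_of_forall_single {R ι M F : Type*} [Semiring R] [Fintype ι] [DecidableEq ι]
    [AddCommMonoid M] [Module R M] [FunLike F (ι → R) M] [LinearMapClass F R (ι → R) M]
    (T : F) {p : ι → Prop} {w : ι → R} (hT : ∀ i, p i → T (Pi.single i 1) = 0)
    (hw : ∀ i, ¬p i → w i = 0) : T w = 0 := by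
  rw [pi_eq_sum_univ' w, map_sum]
  refine Finset.sum_eq_zero fun i _ => ?_
  by_cases hi : p i
  · rw [map_smul, hT i hi, smul_zero]
  · rw [hw i hi, zero_smul, map_zero]

theorem sum_ite_apply_single_mul_eq {ι κ : Type*} [Fintype ι] [DecidableEq ι]
    (T : (ι → ℝ) →L[ℝ] (κ → ℝ)) (p : ι → Prop) [DecidablePred p] (u : ι → ℝ) (k : κ) :
    ∑ i, (if p i then T (Pi.single i 1) k * u i else 0) =
      T (fun i => if p i then u i else 0) k := by
  conv_rhs => rw [pi_eq_sum_univ' (fun i => if p i then u i else 0), map_sum]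
  simp only [map_smul, Finset.sum_apply, Pi.smul_apply, smul_eq_mul]
  refine Finset.sum_congr rfl fun i _ => ?_
  split_ifs <;> ring

theorem fderiv_fderiv_apply_eq_zero_of_forall_single {ι κ : Type*} [Fintype ι] [DecidableEq ι]
    [Fintype κ] {Q : (ι → ℝ) → (κ → ℝ)} {x : ι → ℝ} (hQ : DifferentiableAt ℝ (fderiv ℝ Q) x) {k : κ}
    {p : ι → Prop} (hpartial : ∀ i j, p i → p j →
      fderiv ℝ (fun y => fderiv ℝ Q y (Pi.single j 1) k) x (Pi.single i 1) = 0)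
    {w : ι → ℝ} (hw : ∀ i, ¬p i → w i = 0) : fderiv ℝ (fderiv ℝ Q) x w w k = 0 := by
  let Φ : (ι → ℝ) → ((ι → ℝ) →L[ℝ] (κ → ℝ)) →L[ℝ] ℝ := fun v =>
    (ContinuousLinearMap.proj k).comp (ContinuousLinearMap.apply ℝ (κ → ℝ) v)
  have hchain : ∀ j, fderiv ℝ (fun y => fderiv ℝ Q y (Pi.single j 1) k) x =
      (Φ (Pi.single j 1)).comp (fderiv ℝ (fderiv ℝ Q) x) :=
    fun j => ((Φ (Pi.single j 1)).hasFDerivAt.comp x hQ.hasFDerivAt).fderiv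
  refine map_eq_zero_of_forall_single
    ((Φ w).comp (fderiv ℝ (fderiv ℝ Q) x)) (fun i hi => ?_) hw
  refine map_eq_zero_of_forall_single
    ((ContinuousLinearMap.proj k).comp (fderiv ℝ (fderiv ℝ Q) x (Pi.single i 1)))
    (fun j hj => ?_) hw
  simpa [hchain, Φ] using hpartial i j hi hj

theorem ContinuousLinearMap.norm_proj_le_one {ι : Type*} [Fintype ι] (k : ι) :
    ‖ContinuousLinearMap.proj (R := ℝ) (φ := fun _ : ι => ℝ) k‖ ≤ 1 :=
  opNorm_le_bound _ zero_le_one fun x => by simpa using norm_le_pi_norm x k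

theorem pi_norm_ite_le {ι E : Type*} [Fintype ι] [SeminormedAddCommGroup E] (p : ι → Prop)
    [DecidablePred p] (u : ι → E) : ‖fun i => if p i then u i else 0‖ ≤ ‖u‖ :=
  (pi_norm_le_iff_of_nonneg (norm_nonneg u)).2 fun i => by
    split_ifs
    · exact norm_le_pi_norm u i
    · simp

theorem normFlat_le_norm {n : ℕ} (u : Fin n → ℝ) : normFlat u ≤ ‖u‖ :=
  pi_norm_ite_le _ u

theorem exists_eq_smul_single_add_normFlat {n r : ℕ} (hr : 1 ≤ r) (u : Fin n → ℝ)
    {e₀ : Fin n} (he₀ : (e₀ : ℕ) = 0) :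
    ∃ v : Fin n → ℝ,
      u = u e₀ • Pi.single e₀ 1 + (v + fun i : Fin n => if r ≤ (i : ℕ) then u i else 0) ∧
      (∀ i : Fin n, ¬(i : ℕ) < r → v i = 0) ∧ ‖v‖ ≤ normFlat u ∧
      ‖v + fun i : Fin n => if r ≤ (i : ℕ) then u i else 0‖ = normFlat u := by
  set w : Fin n → ℝ := fun i => if 1 ≤ (i : ℕ) then u i else 0
  refine ⟨fun i => if (i : ℕ) < r then w i else 0, funext fun i => ?_, fun i hi => if_neg hi,
    pi_norm_ite_le _ w, congrArg norm ?_⟩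
  · rcases eq_or_ne i e₀ with rfl | hi
    · simp [w, he₀]; omega
    · have : (i : ℕ) ≠ 0 := fun h => hi (Fin.ext (h.trans he₀.symm))
      simp only [Pi.add_apply, Pi.smul_apply, Pi.single_eq_of_ne hi, smul_zero, zero_add, w]
      split_ifs <;> (try simp) <;> omega
  · funext i
    simp only [Pi.add_apply, w]
    split_ifs <;> (try simp) <;> omega

section Calculus

variable {E F G : Type*} [NormedAddCommGroup E] [NormedSpace ℝ E] [NormedAddCommGroup F]
  [NormedSpace ℝ F] [NormedAddCommGroup G] [NormedSpace ℝ G]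

theorem ContDiffAt.exists_ball_lipschitzOnWith_fderiv_fderiv {f : E → F} {x : E}
    (hf : ContDiffAt ℝ 3 f x) :
    ∃ ρ > 0, ∃ L₁ L₂ M : ℝ≥0, (∀ z ∈ ball x ρ, HasFDerivAt f (fderiv ℝ f z) z) ∧
      (∀ z ∈ ball x ρ, HasFDerivAt (fderiv ℝ f) (fderiv ℝ (fderiv ℝ f) z) z) ∧
      LipschitzOnWith L₁ (fderiv ℝ f) (ball x ρ) ∧
      LipschitzOnWith L₂ (fderiv ℝ (fderiv ℝ f)) (ball x ρ) ∧
      ∀ z ∈ ball x ρ, ‖fderiv ℝ (fderiv ℝ f) z‖ ≤ M := by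
  have hf₁ : ContDiffAt ℝ 2 (fderiv ℝ f) x := hf.fderiv_right (by norm_num)
  have hf₂ : ContDiffAt ℝ 1 (fderiv ℝ (fderiv ℝ f)) x := hf₁.fderiv_right (by norm_num)
  obtain ⟨L₁, t₁, ht₁, hlip₁⟩ := (hf₁.of_le (by norm_num)).exists_lipschitzOnWith
  obtain ⟨L₂, t₂, ht₂, hlip₂⟩ := hf₂.exists_lipschitzOnWith
  have hnorm : ContinuousAt (fun z => ‖fderiv ℝ (fderiv ℝ f) z‖) x :=
    ContinuousAt.norm (E := E →L[ℝ] E →L[ℝ] F) hf₂.continuousAt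
  have hnear : ∀ᶠ z in 𝓝 x, ContDiffAt ℝ 3 f z ∧
      ‖fderiv ℝ (fderiv ℝ f) z‖ ≤ ‖fderiv ℝ (fderiv ℝ f) x‖ + 1 ∧ z ∈ t₁ ∧ z ∈ t₂ :=
    (hf.eventually (by decide)).and <|
      (hnorm.eventually (eventually_le_nhds (lt_add_one _))).and <|
        Filter.inter_mem ht₁ ht₂
  obtain ⟨ρ, hρ, hball⟩ := Metric.eventually_nhds_iff_ball.1 hnear
  refine ⟨ρ, hρ, L₁, L₂, ‖fderiv ℝ (fderiv ℝ f) x‖₊ + 1,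
    fun z hz => ((hball z hz).1.differentiableAt (by norm_num)).hasFDerivAt,
    fun z hz => (((hball z hz).1.fderiv_right (m := 1) (by norm_num)).differentiableAt
      (by norm_num)).hasFDerivAt,
    hlip₁.mono fun z hz => (hball z hz).2.2.1, hlip₂.mono fun z hz => (hball z hz).2.2.2,
    fun z hz => (hball z hz).2.1⟩

theorem norm_image_sub_le_of_norm_fderiv_apply_le_segment {f : E → F} {f' : E → E →L[ℝ] F}
    {x y : E} {C : ℝ} (hf : ∀ z ∈ segment ℝ x y, HasFDerivAt f (f' z) z)
    (bound : ∀ z ∈ segment ℝ x y, ‖f' z (y - x)‖ ≤ C) : ‖f y - f x‖ ≤ C := by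
  have hmem : ∀ t ∈ Icc (0 : ℝ) 1, x + t • (y - x) ∈ segment ℝ x y := fun t ht => by
    rw [segment_eq_image']; exact mem_image_of_mem _ ht
  have hline : ∀ t : ℝ, HasDerivAt (fun t : ℝ => x + t • (y - x)) (y - x) t := fun t => by
    simpa using ((hasDerivAt_id t).smul_const (y - x)).const_add x
  simpa using norm_image_sub_le_of_norm_deriv_le_segment_01'
    (f := fun t : ℝ => f (x + t • (y - x))) (f' := fun t => f' (x + t • (y - x)) (y - x))
    (fun t ht => ((hf _ (hmem t ht)).comp_hasDerivAt t (hline t)).hasDerivWithinAt)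
    (fun t ht => bound _ (hmem t (Ico_subset_Icc_self ht)))

theorem norm_image_sub_sub_fderiv_le_of_lipschitzOnWith {f : E → F} {f' : E → E →L[ℝ] F}
    {s : Set E} {L : ℝ≥0} {x y : E} (hf : ∀ z ∈ s, HasFDerivAt f (f' z) z)
    (hlip : LipschitzOnWith L f' s) (hxy : segment ℝ x y ⊆ s) :
    ‖f y - f x - f' x (y - x)‖ ≤ L * ‖y - x‖ ^ 2 := by
  have bound : ∀ z ∈ segment ℝ x y, ‖f' z - f' x‖ ≤ L * ‖y - x‖ := fun z hz =>
    (hlip.norm_sub_le (hxy hz) (hxy (left_mem_segment ℝ x y))).trans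
      (by gcongr; exact norm_sub_le_of_mem_segment hz)
  calc ‖f y - f x - f' x (y - x)‖ ≤ L * ‖y - x‖ * ‖y - x‖ :=
        (convex_segment x y).norm_image_sub_le_of_norm_hasFDerivWithin_le'
          (fun z hz => (hf z (hxy hz)).hasFDerivWithinAt) bound (left_mem_segment ℝ x y)
          (right_mem_segment ℝ x y)
    _ = L * ‖y - x‖ ^ 2 := by ring

section Estimates

variable {f : E → F} {f' : E → E →L[ℝ] F} {f'' : E → E →L[ℝ] E →L[ℝ] F} {s : Set E}
  {L₁ L₂ M : ℝ≥0} {R : ℝ} {a v vD : E}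

theorem segment_subset_closedBall_zero {x y : E} (hx : ‖x‖ ≤ R) (hy : ‖y‖ ≤ R) :
    segment ℝ x y ⊆ closedBall 0 R :=
  (convex_closedBall 0 R).segment_subset (mem_closedBall_zero_iff.2 hx)
    (mem_closedBall_zero_iff.2 hy)

theorem norm_image_sub_fderiv_apply_le (hf : ∀ z ∈ s, HasFDerivAt f (f' z) z)
    (hlip : LipschitzOnWith L₁ f' s) (hs : closedBall 0 R ⊆ s) (haR : ‖a‖ ≤ R)
    (huR : ‖a + (v + vD)‖ ≤ R) (hfa : f a = 0) (hf'a : f' a v = 0) :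
    ‖f (a + (v + vD)) - f' 0 vD‖ ≤ L₁ * (‖v + vD‖ ^ 2 + ‖a‖ * ‖vD‖) := by
  have hseg : segment ℝ a (a + (v + vD)) ⊆ s := (segment_subset_closedBall_zero haR huR).trans hs
  have h0 : (0 : E) ∈ s := hs (mem_closedBall_self ((norm_nonneg a).trans haR))
  have hsplit : f (a + (v + vD)) - f' 0 vD =
      (f (a + (v + vD)) - f a - f' a (v + vD)) + (f' a - f' 0) vD := by
    simp [hfa, hf'a]
  have hfirst := norm_image_sub_sub_fderiv_le_of_lipschitzOnWith hf hlip hseg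
  rw [add_sub_cancel_left] at hfirst
  have hsecond : ‖(f' a - f' 0) vD‖ ≤ L₁ * ‖a‖ * ‖vD‖ :=
    ((f' a - f' 0).le_opNorm vD).trans (by
      gcongr; simpa using hlip.norm_sub_le (hseg (left_mem_segment ℝ _ _)) h0)
  rw [hsplit]
  calc _ ≤ _ := norm_add_le _ _
    _ ≤ L₁ * ‖v + vD‖ ^ 2 + L₁ * ‖a‖ * ‖vD‖ := add_le_add hfirst hsecond
    _ = L₁ * (‖v + vD‖ ^ 2 + ‖a‖ * ‖vD‖) := by ring

theorem norm_comp_fderiv_apply_le (ℓ : F →L[ℝ] G) (hf' : ∀ z ∈ s, HasFDerivAt f' (f'' z) z)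
    (hlip : LipschitzOnWith L₂ f'' s) (hM : ∀ z ∈ s, ‖f'' z‖ ≤ M) (hs : closedBall 0 R ⊆ s)
    (haR : ‖a‖ ≤ R) (huR : ‖a + (v + vD)‖ ≤ R) (hf'a : ℓ (f' a v) = 0)
    (hf''0 : ℓ (f'' 0 v v) = 0) {z : E} (hz : z ∈ segment ℝ a (a + (v + vD))) :
    ‖ℓ (f' z v)‖ ≤ ‖ℓ‖ * (L₂ * R * ‖v‖ + M * ‖vD‖) * ‖v‖ := by
  have hR : 0 ≤ R := (norm_nonneg a).trans haR
  have hball : segment ℝ a (a + (v + vD)) ⊆ closedBall 0 R :=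
    segment_subset_closedBall_zero haR huR
  have hsub : segment ℝ a z ⊆ segment ℝ a (a + (v + vD)) :=
    (convex_segment _ _).segment_subset (left_mem_segment ℝ _ _) hz
  obtain ⟨t, ⟨ht₀, ht₁⟩, rfl⟩ : ∃ t ∈ Icc (0 : ℝ) 1, a + t • (v + vD) = z := by
    simpa [segment_eq_image'] using hz
  set Φ : (E →L[ℝ] F) →L[ℝ] G := ℓ.comp (ContinuousLinearMap.apply ℝ F v)
  have bound : ∀ w ∈ segment ℝ a (a + t • (v + vD)),
      ‖Φ.comp (f'' w) (a + t • (v + vD) - a)‖ ≤ ‖ℓ‖ * (L₂ * R * ‖v‖ + M * ‖vD‖) * ‖v‖ := by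
    intro w hw
    have hwR : ‖w‖ ≤ R := mem_closedBall_zero_iff.1 (hball (hsub hw))
    have hws : w ∈ s := hs (hball (hsub hw))
    have hexpand : Φ.comp (f'' w) (a + t • (v + vD) - a) =
        t • (ℓ ((f'' w - f'' 0) v v) + ℓ (f'' w vD v)) := by
      simp [Φ, hf''0]
    have hv : ‖ℓ ((f'' w - f'' 0) v v)‖ ≤ ‖ℓ‖ * (L₂ * R * ‖v‖ * ‖v‖) :=
      calc ‖ℓ ((f'' w - f'' 0) v v)‖ ≤ ‖ℓ‖ * (‖f'' w - f'' 0‖ * ‖v‖ * ‖v‖) :=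
            (ℓ.le_opNorm _).trans (by gcongr; exact (f'' w - f'' 0).le_opNorm₂ v v)
        _ ≤ ‖ℓ‖ * (L₂ * R * ‖v‖ * ‖v‖) := by
            gcongr
            simpa using (hlip.norm_sub_le hws (hs (mem_closedBall_self hR))).trans
              (by gcongr; simpa using hwR)
    have hvD : ‖ℓ (f'' w vD v)‖ ≤ ‖ℓ‖ * (M * ‖vD‖ * ‖v‖) :=
      (ℓ.le_opNorm _).trans (by
        gcongr
        exact ((f'' w).le_opNorm₂ vD v).trans (by gcongr; exact hM w hws))
    rw [hexpand, norm_smul, Real.norm_of_nonneg ht₀]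
    calc t * ‖ℓ ((f'' w - f'' 0) v v) + ℓ (f'' w vD v)‖
        ≤ 1 * (‖ℓ ((f'' w - f'' 0) v v)‖ + ‖ℓ (f'' w vD v)‖) :=
          mul_le_mul ht₁ (norm_add_le _ _) (norm_nonneg _) zero_le_one
      _ ≤ ‖ℓ‖ * (L₂ * R * ‖v‖ + M * ‖vD‖) * ‖v‖ := by
          rw [one_mul]; exact (add_le_add hv hvD).trans_eq (by ring)
  have := norm_image_sub_le_of_norm_fderiv_apply_le_segment
    (fun w hw => Φ.hasFDerivAt.comp w (hf' w (hs (hball (hsub hw))))) bound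
  simpa [Φ, hf'a] using this

theorem norm_comp_image_le (ℓ : F →L[ℝ] G) (hf : ∀ z ∈ s, HasFDerivAt f (f' z) z)
    (hf' : ∀ z ∈ s, HasFDerivAt f' (f'' z) z) (hlip₁ : LipschitzOnWith L₁ f' s)
    (hlip₂ : LipschitzOnWith L₂ f'' s) (hM : ∀ z ∈ s, ‖f'' z‖ ≤ M) (hs : closedBall 0 R ⊆ s)
    (haR : ‖a‖ ≤ R) (huR : ‖a + (v + vD)‖ ≤ R) (hvR : ‖v‖ ≤ R) (hfa : ℓ (f a) = 0)
    (hf'a : ℓ (f' a v) = 0) (hf'0 : ℓ (f' 0 vD) = 0) (hf''0 : ℓ (f'' 0 v v) = 0) :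
    ‖ℓ (f (a + (v + vD)))‖ ≤ ‖ℓ‖ * (L₂ * ‖v‖ ^ 2 + (L₁ + M) * ‖vD‖) * R := by
  have hR : 0 ≤ R := (norm_nonneg a).trans haR
  have hball : segment ℝ a (a + (v + vD)) ⊆ closedBall 0 R :=
    segment_subset_closedBall_zero haR huR
  have bound : ∀ z ∈ segment ℝ a (a + (v + vD)),
      ‖ℓ.comp (f' z) (a + (v + vD) - a)‖ ≤ ‖ℓ‖ * (L₂ * ‖v‖ ^ 2 + (L₁ + M) * ‖vD‖) * R := by
    intro z hz
    have hzR : ‖z‖ ≤ R := mem_closedBall_zero_iff.1 (hball hz)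
    have hexpand : ℓ.comp (f' z) (a + (v + vD) - a) = ℓ (f' z v) + ℓ ((f' z - f' 0) vD) := by
      simp [hf'0]
    have hv := norm_comp_fderiv_apply_le ℓ hf' hlip₂ hM hs haR huR hf'a hf''0 hz
    have hvD : ‖ℓ ((f' z - f' 0) vD)‖ ≤ ‖ℓ‖ * (L₁ * R * ‖vD‖) :=
      (ℓ.le_opNorm _).trans (by
        gcongr
        refine ((f' z - f' 0).le_opNorm vD).trans ?_
        gcongr
        simpa using (hlip₁.norm_sub_le (hs (hball hz)) (hs (mem_closedBall_self hR))).trans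
          (by gcongr; simpa using hzR))
    have hvvD : M * ‖vD‖ * ‖v‖ ≤ M * ‖vD‖ * R := by gcongr
    rw [hexpand]
    calc ‖ℓ (f' z v) + ℓ ((f' z - f' 0) vD)‖
        ≤ ‖ℓ‖ * (L₂ * R * ‖v‖ + M * ‖vD‖) * ‖v‖ + ‖ℓ‖ * (L₁ * R * ‖vD‖) :=
          (norm_add_le _ _).trans (add_le_add hv hvD)
      _ = ‖ℓ‖ * (L₂ * ‖v‖ ^ 2 * R + M * ‖vD‖ * ‖v‖ + L₁ * ‖vD‖ * R) := by ring
      _ ≤ ‖ℓ‖ * (L₂ * ‖v‖ ^ 2 * R + M * ‖vD‖ * R + L₁ * ‖vD‖ * R) := by gcongr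
      _ = ‖ℓ‖ * (L₂ * ‖v‖ ^ 2 + (L₁ + M) * ‖vD‖) * R := by ring
  simpa [hfa] using norm_image_sub_le_of_norm_fderiv_apply_le_segment
    (fun z hz => ℓ.hasFDerivAt.comp z (hf z (hs (hball hz)))) bound

end Estimates

end Calculus

/-- Refined expansion of a strongly degenerate source term: if `Q` is `C³`
near `0`, `Q` and its partials `∂Q/∂u_q` (`q ≤ r`) vanish along the first axis near `0`,
the rows `1,…,r` of `∇Q(0)` vanish and `∂²Q_q/∂u_{q'}∂u_{q''}(0) = 0` for `q,q',q'' ≤ r`,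
then near `0`: `|Q_q(u)| ≤ C(|u^D| + |u^♭|²)|u|` for `q ≤ r` and
`|Q_p(u) − Σ_{p'>r} ∂Q_p/∂u_{p'}(0) u_{p'}| ≤ C(|u^D||u₁| + |u^♭|²)` for `p > r`. -/
theorem statement10 (n r : ℕ) (hn : 2 ≤ n) (hr : 1 ≤ r)
    (Q : (Fin n → ℝ) → (Fin n → ℝ))
    (hQ : ContDiffAt ℝ 3 Q 0)
    (ha : ∃ ε > 0, ∀ t : ℝ, |t| < ε →
      Q (t • (Pi.single (⟨0, by omega⟩ : Fin n) 1 : Fin n → ℝ)) = 0 ∧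
      ∀ q : Fin n, (q : ℕ) < r →
        fderiv ℝ Q (t • (Pi.single (⟨0, by omega⟩ : Fin n) 1 : Fin n → ℝ))
          (Pi.single q 1) = 0)
    (hb : ∀ q i : Fin n, (q : ℕ) < r → fderiv ℝ Q 0 (Pi.single i 1) q = 0)
    (hc : ∀ q q' q'' : Fin n, (q : ℕ) < r → (q' : ℕ) < r → (q'' : ℕ) < r →
      fderiv ℝ (fun x => fderiv ℝ Q x (Pi.single q'' 1) q) 0 (Pi.single q' 1) = 0) :
    ∃ C > 0, ∃ δ > 0, ∀ u : Fin n → ℝ, ‖u‖ ≤ δ →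
      (∀ q : Fin n, (q : ℕ) < r →
        |Q u q| ≤ C * (normTail r u + normFlat u ^ 2) * ‖u‖) ∧
      (∀ p : Fin n, r ≤ (p : ℕ) →
        |Q u p - ∑ p' : Fin n,
            (if r ≤ (p' : ℕ) then fderiv ℝ Q 0 (Pi.single p' 1) p * u p' else 0)|
          ≤ C * (normTail r u * |u (⟨0, by omega⟩ : Fin n)| + normFlat u ^ 2)) := by
  obtain ⟨ε, hε, haxis⟩ := ha
  obtain ⟨ρ, hρ, L₁, L₂, M, hQ₁, hQ₂, hlip₁, hlip₂, hM⟩ :=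
    hQ.exists_ball_lipschitzOnWith_fderiv_fderiv
  refine ⟨L₁ + L₂ + M + 1, by positivity, min (ρ / 2) (ε / 2), by positivity, fun u hu => ?_⟩
  set e₀ : Fin n := ⟨0, by omega⟩
  set a : Fin n → ℝ := u e₀ • Pi.single e₀ 1
  set vD : Fin n → ℝ := fun i => if r ≤ (i : ℕ) then u i else 0
  obtain ⟨v, hu_eq, hv_supp, hv_le, hv_norm⟩ :=
    exists_eq_smul_single_add_normFlat hr u (e₀ := e₀) rfl
  have hue₀ : |u e₀| ≤ ‖u‖ := norm_le_pi_norm u e₀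
  have ha : ‖a‖ = |u e₀| := by simp [a, norm_smul, Pi.norm_single]
  have haxis_u := haxis (u e₀) (by linarith [min_le_right (ρ / 2) (ε / 2)])
  have hDa : fderiv ℝ Q a v = 0 := map_eq_zero_of_forall_single _ haxis_u.2 hv_supp
  have hs : closedBall (0 : Fin n → ℝ) ‖u‖ ⊆ ball 0 ρ :=
    closedBall_subset_ball (by linarith [min_le_left (ρ / 2) (ε / 2)])
  have huR : ‖a + (v + vD)‖ ≤ ‖u‖ := hu_eq ▸ le_rfl
  refine ⟨fun q hq => ?_, fun p _ => ?_⟩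
  · have hrow : fderiv ℝ Q 0 vD q = 0 :=
      map_eq_zero_of_forall_single ((ContinuousLinearMap.proj q).comp (fderiv ℝ Q 0))
        (p := fun _ => True) (fun i _ => hb q i hq) (by simp)
    have hrow₂ : fderiv ℝ (fderiv ℝ Q) 0 v v q = 0 :=
      fderiv_fderiv_apply_eq_zero_of_forall_single (hQ₂ 0 (mem_ball_self hρ)).differentiableAt
        (fun i j hi hj => hc q i j hq hi hj) hv_supp
    have h := norm_comp_image_le (ContinuousLinearMap.proj q) hQ₁ hQ₂ hlip₁ hlip₂ hM hs
      (ha ▸ hue₀) huR (hv_le.trans (normFlat_le_norm u)) (congrFun haxis_u.1 q) (congrFun hDa q)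
      hrow hrow₂
    rw [← hu_eq] at h
    calc |Q u q| ≤ 1 * (L₂ * normFlat u ^ 2 + (L₁ + M) * ‖vD‖) * ‖u‖ :=
          h.trans (by gcongr; exact ContinuousLinearMap.norm_proj_le_one q)
      _ ≤ (L₁ + L₂ + M + 1) * (‖vD‖ + normFlat u ^ 2) * ‖u‖ := by
          gcongr ?_ * _
          nlinarith [L₁.coe_nonneg, L₂.coe_nonneg, M.coe_nonneg, sq_nonneg (normFlat u),
            norm_nonneg vD]
  · rw [sum_ite_apply_single_mul_eq]
    have h := norm_image_sub_fderiv_apply_le hQ₁ hlip₁ hs (ha ▸ hue₀) huR haxis_u.1 hDa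
    rw [← hu_eq, hv_norm, ha] at h
    calc |Q u p - fderiv ℝ Q 0 vD p| ≤ ‖Q u - fderiv ℝ Q 0 vD‖ :=
          norm_le_pi_norm (Q u - fderiv ℝ Q 0 vD) p
      _ ≤ L₁ * (‖vD‖ * |u e₀| + normFlat u ^ 2) := h.trans_eq (by ring)
      _ ≤ (L₁ + L₂ + M + 1) * (‖vD‖ * |u e₀| + normFlat u ^ 2) := by
          gcongr
          linarith [L₂.coe_nonneg, M.coe_nonneg]
end
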